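/- arXiv:2510.14106 — 2 statements merged into one kernel-verified Lean document; each statement's English description precedes it below -/
import Mathlib

section
/- Let C be a finite set of outcomes, n agents with non-negative utility vectors u_i : C → ℝ_{≥0}, and suppose p* maximizes Nash welfare Π_{i=1}^n (u_i^T p) over p ∈ Δ(C), with u_i^T p* > 0 for all i. Then p* is in the ex-ante core: there is no coalition S ⊆ N and distribution p' ∈ Δ(C) such that (|S|/n) · (u_i^T p') ≥ u_i^T p* for all i ∈ S with strict inequality for at least one i ∈ S. -/
lemma deriv_le_zero_of_local_max {f : ℝ → ℝ} {f' : ℝ}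
    (hd : HasDerivAt f f' 0) (hle : ∀ t ∈ Set.Ioc (0:ℝ) 1, f t ≤ f 0) : f' ≤ 0 := by
  have h := hasDerivAt_iff_tendsto_slope.mp hd
  have h2 : Filter.Tendsto (slope f 0) (nhdsWithin 0 (Set.Ioi 0)) (nhds f') :=
    h.mono_left (nhdsWithin_mono _ (fun x hx => ne_of_gt hx))
  refine le_of_tendsto h2 ?_
  filter_upwards [Ioc_mem_nhdsGT_of_mem (by norm_num : (0:ℝ) ∈ Set.Ico (0:ℝ) 1)] with t ht
  have ht0 : 0 < t := ht.1
  have : f t - f 0 ≤ 0 := sub_nonpos.mpr (hle t ht)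
  simp only [slope_def_field, div_eq_mul_inv]
  rw [sub_zero]
  have := div_nonpos_of_nonpos_of_nonneg this ht0.le
  simpa [div_eq_mul_inv] using this

lemma nash_gradient_ineq {n : ℕ} (a b : Fin n → ℝ)
    (ha : ∀ i, 0 < a i)
    (hle : ∀ t ∈ Set.Ioc (0:ℝ) 1, (∏ i, (a i + t * (b i - a i))) ≤ ∏ i, a i) :
    ∑ i, b i / a i ≤ n := by
  set f : ℝ → ℝ := fun t => ∏ i, (a i + t * (b i - a i)) with hf
  have hd : HasDerivAt f (∑ i, (∏ j ∈ Finset.univ.erase i, (a j + 0 * (b j - a j))) • (b i - a i)) 0 := by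
    apply HasDerivAt.fun_finsetProd (f := fun i t => a i + t * (b i - a i))
    intro i _
    simpa using ((hasDerivAt_id (0:ℝ)).mul_const (b i - a i)).const_add (a i)
  have hf0 : f 0 = ∏ i, a i := by simp [hf]
  have key := deriv_le_zero_of_local_max hd (by
    intro t ht; rw [hf0]; exact hle t ht)
  have hP : 0 < ∏ i, a i := Finset.prod_pos (fun i _ => ha i)
  have hterm : ∀ i : Fin n, (∏ j ∈ Finset.univ.erase i, (a j + 0 * (b j - a j))) • (b i - a i)
      = (∏ j, a j) * (b i / a i - 1) := by
    intro i
    have herase : (∏ j ∈ Finset.univ.erase i, a j) * a i = ∏ j, a j :=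
      Finset.prod_erase_mul _ _ (Finset.mem_univ i)
    have hai := (ha i).ne'
    simp only [zero_mul, add_zero, smul_eq_mul]
    field_simp
    rw [← herase]; ring
  rw [Finset.sum_congr rfl (fun i _ => hterm i), ← Finset.mul_sum] at key
  have hsum : ∑ i, (b i / a i - 1) ≤ 0 := by
    by_contra h; push_neg at h; nlinarith
  rw [Finset.sum_sub_distrib] at hsum
  simp only [Finset.sum_const, Finset.card_univ, Fintype.card_fin, nsmul_eq_mul, mul_one] at hsum
  linarith

/-- A Nash-welfare-maximizing lottery `p` over the finite outcome set `C`
(with strictly positive expected utilities) lies in the ex-ante core: no nonempty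
coalition `S ⊆ N` with budget `|S|/n` can find a lottery `q` with
`(|S|/n)·(uᵢᵀ q) ≥ uᵢᵀ p` for all `i ∈ S`, strict for at least one `i ∈ S`. -/
theorem nash_welfare_maximizer_in_ex_ante_core
    {C : Type*} [Fintype C] (n : ℕ) (hn : 0 < n)
    (u : Fin n → C → ℝ) (hu : ∀ i x, 0 ≤ u i x)
    (p : C → ℝ) (hp0 : ∀ x, 0 ≤ p x) (hp1 : ∑ x, p x = 1)
    (hpos : ∀ i, 0 < ∑ x, u i x * p x)
    (hmax : ∀ q : C → ℝ, (∀ x, 0 ≤ q x) → (∑ x, q x = 1) →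
      ∏ i, (∑ x, u i x * q x) ≤ ∏ i, (∑ x, u i x * p x)) :
    ¬ ∃ (S : Finset (Fin n)) (q : C → ℝ), S.Nonempty ∧
        (∀ x, 0 ≤ q x) ∧ (∑ x, q x = 1) ∧
        (∀ i ∈ S, (S.card : ℝ) / n * (∑ x, u i x * q x) ≥ ∑ x, u i x * p x) ∧
        (∃ i ∈ S, (S.card : ℝ) / n * (∑ x, u i x * q x) > ∑ x, u i x * p x) := by
  rintro ⟨S, q, hSne, hq0, hq1, hall, i0, hi0S, hstrict⟩
  set a : Fin n → ℝ := fun i => ∑ x, u i x * p x with ha_def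
  set b : Fin n → ℝ := fun i => ∑ x, u i x * q x with hb_def
  have ha : ∀ i, 0 < a i := hpos
  have hb : ∀ i, 0 ≤ b i := fun i => Finset.sum_nonneg fun x _ => mul_nonneg (hu i x) (hq0 x)
  -- the mixture lotteries
  have hle : ∀ t ∈ Set.Ioc (0:ℝ) 1, (∏ i, (a i + t * (b i - a i))) ≤ ∏ i, a i := by
    intro t ht
    set r : C → ℝ := fun x => (1 - t) * p x + t * q x with hr
    have hr0 : ∀ x, 0 ≤ r x := fun x =>
      add_nonneg (mul_nonneg (by linarith [ht.2]) (hp0 x)) (mul_nonneg ht.1.le (hq0 x))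
    have hr1 : ∑ x, r x = 1 := by
      simp only [hr, Finset.sum_add_distrib, ← Finset.mul_sum, hp1, hq1]; ring
    have heq : ∀ i, (∑ x, u i x * r x) = a i + t * (b i - a i) := by
      intro i
      simp only [hr, mul_add, Finset.sum_add_distrib, ha_def, hb_def]
      have h1 : ∑ x, u i x * ((1 - t) * p x) = (1 - t) * ∑ x, u i x * p x := by
        rw [Finset.mul_sum]; exact Finset.sum_congr rfl fun x _ => by ring
      have h2 : ∑ x, u i x * (t * q x) = t * ∑ x, u i x * q x := by
        rw [Finset.mul_sum]; exact Finset.sum_congr rfl fun x _ => by ring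
      rw [h1, h2]; ring
    calc (∏ i, (a i + t * (b i - a i))) = ∏ i, (∑ x, u i x * r x) := by
          exact (Finset.prod_congr rfl fun i _ => (heq i)).symm
      _ ≤ ∏ i, a i := hmax r hr0 hr1
  have hgrad := nash_gradient_ineq a b ha hle
  -- coalition gives a contradiction
  have hScard : (0:ℝ) < S.card := by exact_mod_cast Finset.card_pos.mpr hSne
  have hn' : (0:ℝ) < n := by exact_mod_cast hn
  have hratio : ∀ i ∈ S, (n : ℝ) / S.card ≤ b i / a i := by
    intro i hi
    have h := hall i hi
    rw [ge_iff_le, div_mul_eq_mul_div, le_div_iff₀ hn'] at h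
    rw [div_le_div_iff₀ hScard (ha i)]
    nlinarith [ha i]
  have hratio0 : (n : ℝ) / S.card < b i0 / a i0 := by
    have h := hstrict
    rw [gt_iff_lt, div_mul_eq_mul_div, lt_div_iff₀ hn'] at h
    rw [div_lt_div_iff₀ hScard (ha i0)]
    nlinarith [ha i0]
  have hSsum : (n : ℝ) < ∑ i ∈ S, b i / a i := by
    have := Finset.sum_lt_sum (f := fun _ : Fin n => (n:ℝ)/S.card) (g := fun i => b i / a i)
      hratio ⟨i0, hi0S, hratio0⟩
    have hc : ∑ _i ∈ S, (n:ℝ)/S.card = n := by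
      rw [Finset.sum_const, nsmul_eq_mul]
      field_simp
    linarith [this, hc ▸ this]
  have hfull : ∑ i ∈ S, b i / a i ≤ ∑ i, b i / a i := by
    apply Finset.sum_le_sum_of_subset_of_nonneg (Finset.subset_univ S)
    intro i _ _
    exact div_nonneg (hb i) (ha i).le
  linarith
end

section
/- For every constant R > 1 there exists an instance with two agents, a finite leaf set C, and a nonempty subset K ⊂ C (the chunked feasible set) such that max_{p∈Δ(C)} Π_{i=1}^2 (u_i^T p) > R · max_{p∈Δ(K)} Π_{i=1}^2 (u_i^T p). Concretely, taking C = {x*, x⁻} with u_1(x*) = u_2(x*) = 1−ε and u_1(x⁻) = u_2(x⁻) = √δ for 0 < ε < 1 and 0 < δ < (1−ε)²/R, and K = {x⁻}, the ratio of optimal Nash welfares is at least (1−ε)²/δ > R. -/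
/-- No constant-factor approximation under chunking. For every `R > 1`
there is a two-agent instance with a finite leaf set `C`, nonnegative utilities, and a
nonempty chunked subset `K ⊂ C`, such that the optimal Nash welfare over lotteries on
`C` exceeds `R` times the optimal Nash welfare over lotteries on `K`. -/
theorem no_constant_factor_approximation_under_chunking :
    ∀ R : ℝ, 1 < R →
      ∃ (C K : Finset ℕ) (u : Fin 2 → ℕ → ℝ),
        (∀ i x, 0 ≤ u i x) ∧ K ⊂ C ∧ K.Nonempty ∧
        ∃ vC vK : ℝ,
          IsGreatest {v : ℝ | ∃ p : ℕ → ℝ, (∀ x, 0 ≤ p x) ∧ (∀ x ∉ C, p x = 0) ∧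
            (∑ x ∈ C, p x = 1) ∧ v = ∏ i, (∑ x ∈ C, u i x * p x)} vC ∧
          IsGreatest {v : ℝ | ∃ p : ℕ → ℝ, (∀ x, 0 ≤ p x) ∧ (∀ x ∉ K, p x = 0) ∧
            (∑ x ∈ K, p x = 1) ∧ v = ∏ i, (∑ x ∈ K, u i x * p x)} vK ∧
          vC > R * vK := by
  intro R hR
  have hR0 : (0:ℝ) < R := lt_trans one_pos hR
  refine ⟨{0,1}, {1}, fun _ x => if x = 0 then 2*R else 1, ?_, ?_, ⟨1, by simp⟩,
    (2*R)*(2*R), 1, ?_, ?_, ?_⟩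
  · intro i x
    by_cases h : x = 0 <;> simp [h] <;> linarith
  · constructor
    · intro x hx; simp at hx; simp [hx]
    · intro h
      have := h (by simp : (0:ℕ) ∈ ({0,1} : Finset ℕ))
      simp at this
  · constructor
    · refine ⟨fun x => if x = 0 then 1 else 0, ?_, ?_, ?_, ?_⟩
      · intro x; by_cases h : x = 0 <;> simp [h]
      · intro x hx; simp at hx; simp [hx.1]
      · simp
      · simp [Fin.prod_univ_two]; ring
    · rintro v ⟨p, hp0, _, hpsum, hv⟩
      have hsum : (∑ x ∈ ({0,1} : Finset ℕ), (if x = 0 then 2*R else 1) * p x) ≤ 2*R := by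
        have h0 := hp0 0
        have h1 := hp0 1
        simp at hpsum ⊢
        nlinarith
      have hnn : (0:ℝ) ≤ ∑ x ∈ ({0,1} : Finset ℕ), (if x = 0 then 2*R else 1) * p x := by
        apply Finset.sum_nonneg
        intro x _
        have := hp0 x
        split_ifs <;> nlinarith
      rw [hv, Fin.prod_univ_two]
      exact mul_le_mul hsum hsum hnn (by linarith)
  · constructor
    · refine ⟨fun x => if x = 1 then 1 else 0, ?_, ?_, ?_, ?_⟩
      · intro x; by_cases h : x = 1 <;> simp [h]
      · intro x hx; simp at hx; simp [hx]
      · simp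
      · simp [Fin.prod_univ_two]
    · rintro v ⟨p, hp0, _, hpsum, hv⟩
      simp at hpsum
      rw [hv, Fin.prod_univ_two]
      simp [hpsum]
  · nlinarith
end
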